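/- arXiv:2412.17962 — 5 statements merged into one kernel-verified Lean document; each statement's English description precedes it below -/
import Mathlib

section
/- If G is a nontrivial uniquely C4+-saturated graph (G is C4+-free and adding any non-edge creates exactly one copy of C4+, and G has at least 4 vertices), then G is connected and has diameter exactly 2. -/
open SimpleGraph

/-- The diamond graph `C₄⁺`: a `4`-cycle with one chord, i.e. `K₄` minus an edge. -/
def diamond : SimpleGraph (Fin 4) := (⊤ : SimpleGraph (Fin 4)).deleteEdges {s(0, 1)}

/-- `G'` is a copy of `H` in `G`, i.e. a subgraph of `G` isomorphic to `H`. -/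
def IsCopy {W V : Type*} (H : SimpleGraph W) {G : SimpleGraph V} (G' : G.Subgraph) : Prop :=
  Nonempty (G'.coe ≃g H)

/-- `G` is uniquely `H`-saturated: `G` is `H`-free, and adding any non-edge
creates exactly one copy of `H`. -/
def UniquelySaturated {W V : Type*} (H : SimpleGraph W) (G : SimpleGraph V) : Prop :=
  (∀ G' : G.Subgraph, ¬ IsCopy H G') ∧
    ∀ u v : V, u ≠ v → ¬ G.Adj u v →
      ∃! G' : (G ⊔ SimpleGraph.fromEdgeSet {s(u, v)}).Subgraph, IsCopy H G'

/-!
Every edge of the diamond lies in a triangle. Adding a non-edge `uv` to `G` creates a copy of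
the diamond, which must use `uv` since `G` itself is diamond-free; the triangle of that copy
through `uv` gives a common neighbour of `u` and `v` in `G`. Hence any two vertices are at
distance at most `2`, and `G` is not complete because `K₄` contains a diamond.
-/

namespace SimpleGraph

variable {V W : Type*} {G : SimpleGraph V} {H : SimpleGraph W}

lemma Subgraph.coe_isContained_of_not_adj {u v : V} (G' : (G ⊔ edge u v).Subgraph)
    (h : ¬ G'.Adj u v) : G'.coe ⊑ G := by
  refine ⟨⟨⟨Subtype.val, fun {x y} hxy => ?_⟩, Subtype.val_injective⟩⟩
  have hxy : G'.Adj x y := hxy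
  rcases G'.adj_sub hxy with hG | hedge
  · exact hG
  · rw [edge_adj] at hedge
    rcases hedge.1 with ⟨hx, hy⟩ | ⟨hx, hy⟩
    · rw [hx, hy] at hxy
      exact absurd hxy h
    · rw [hx, hy] at hxy
      exact absurd hxy.symm h

lemma Subgraph.exists_adj_adj_of_iso {G' : G.Subgraph} (e : G'.coe ≃g H)
    (hH : ∀ a b, H.Adj a b → ∃ c, H.Adj a c ∧ H.Adj b c) {x y : V} (hxy : G'.Adj x y) :
    ∃ z, G'.Adj x z ∧ G'.Adj y z := by
  have hx := G'.edge_vert hxy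
  have hy := G'.edge_vert hxy.symm
  obtain ⟨c, hxc, hyc⟩ :=
    hH _ _ (e.map_adj_iff.mpr (show G'.coe.Adj ⟨x, hx⟩ ⟨y, hy⟩ from hxy))
  exact ⟨e.symm c, by simpa using e.symm.map_adj_iff.mpr hxc,
    by simpa using e.symm.map_adj_iff.mpr hyc⟩

lemma adj_adj_of_sup_edge_adj_adj {u v w : V} (hu : (G ⊔ edge u v).Adj u w)
    (hv : (G ⊔ edge u v).Adj v w) : G.Adj u w ∧ G.Adj v w := by
  have hwu := hu.ne'
  have hwv := hv.ne'
  simp only [sup_adj, edge_adj] at hu hv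
  grind

lemma ne_top_of_free [Fintype V] [Fintype W] (hcard : Fintype.card W ≤ Fintype.card V)
    (hfree : H.Free G) : G ≠ ⊤ := by
  rintro rfl
  exact hfree (isContained_top_iff.mpr (Function.Embedding.nonempty_of_card_le hcard))

lemma ediam_eq_two_of_exists_adj_adj [Nontrivial V] (hG : G ≠ ⊤)
    (h : ∀ u v, u ≠ v → ¬ G.Adj u v → ∃ w, G.Adj u w ∧ G.Adj v w) : G.ediam = 2 := by
  apply le_antisymm
  · refine ediam_le_iff.mpr fun u v => not_lt.mp fun huv => ?_
    obtain ⟨hne, hnadj, hempty⟩ := two_lt_edist_iff.mp huv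
    obtain ⟨w, huw, hvw⟩ := h u v hne hnadj
    exact hempty.subset ⟨huw, hvw⟩
  · by_contra! hlt
    rcases Order.le_one_iff.mp (ENat.lt_two_iff.mp hlt) with h0 | h1
    · exact ediam_ne_zero h0
    · exact hG (ediam_eq_one.mp h1)

end SimpleGraph

lemma diamond_adj_exists_adj_adj : ∀ a b : Fin 4, diamond.Adj a b →
    ∃ c, diamond.Adj a c ∧ diamond.Adj b c := by
  simp only [diamond, deleteEdges_adj, top_adj, Set.mem_singleton_iff]
  decide

namespace UniquelySaturated

variable {V W : Type*} {G : SimpleGraph V} {H : SimpleGraph W}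

lemma free (hG : UniquelySaturated H G) : H.Free G := fun hHG => by
  obtain ⟨G', ⟨e⟩⟩ := hHG.exists_iso_subgraph
  exact hG.1 G' ⟨e.symm⟩

lemma exists_adj_adj (hH : ∀ a b, H.Adj a b → ∃ c, H.Adj a c ∧ H.Adj b c)
    (hG : UniquelySaturated H G) {u v : V} (huv : u ≠ v) (hnadj : ¬ G.Adj u v) :
    ∃ w, G.Adj u w ∧ G.Adj v w := by
  obtain ⟨G', ⟨e⟩, -⟩ := hG.2 u v huv hnadj
  by_cases hG'uv : G'.Adj u v
  · obtain ⟨w, huw, hvw⟩ := G'.exists_adj_adj_of_iso e hH hG'uv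
    exact ⟨w, adj_adj_of_sup_edge_adj_adj (G'.adj_sub huw) (G'.adj_sub hvw)⟩
  · exact (hG.free ((isContained_congr_left e).mp (G'.coe_isContained_of_not_adj hG'uv))).elim

end UniquelySaturated

theorem stmt0 {V : Type*} [Fintype V] (G : SimpleGraph V)
    (hcard : 4 ≤ Fintype.card V) (hsat : UniquelySaturated diamond G) :
    G.Connected ∧ G.diam = 2 := by
  have : Nontrivial V := Fintype.one_lt_card_iff_nontrivial.mp (by omega)
  have hdiam : G.ediam = 2 := ediam_eq_two_of_exists_adj_adj
    (ne_top_of_free (by simpa using hcard) hsat.free)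
    fun _ _ => hsat.exists_adj_adj diamond_adj_exists_adj_adj
  exact ⟨connected_of_ediam_ne_top (by simp [hdiam]), by simp [diam, hdiam]⟩
end

section
/- Let G be a nontrivial uniquely C4+-saturated graph and let u, v be any two non-adjacent vertices of G. Then the distance between u and v is 2, and the number of paths of length 2 between u and v is either 1 or 2. -/
open SimpleGraph

lemma diamond_adj {i j : Fin 4} :
    diamond.Adj i j ↔ i ≠ j ∧ ¬(i = 0 ∧ j = 1) ∧ ¬(i = 1 ∧ j = 0) := by
  simp only [diamond, deleteEdges_adj, top_adj, Set.mem_singleton_iff, Sym2.eq_iff]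
  tauto

instance : DecidableRel diamond.Adj := fun _ _ => decidable_of_iff' _ diamond_adj

lemma diamond_triangle : ∀ i j : Fin 4, diamond.Adj i j →
    ∃ k, diamond.Adj i k ∧ diamond.Adj j k := by decide

lemma isCopy_map {W V : Type*} {H : SimpleGraph W} {G' : SimpleGraph V} (f : H →g G')
    (hf : Function.Injective f) : IsCopy H ((⊤ : H.Subgraph).map f) := by
  classical
  have he : ∀ x : ((⊤ : H.Subgraph).map f).verts, ∃ a : W, f a = x.1 := by
    rintro ⟨x, hx⟩
    obtain ⟨a, -, rfl⟩ := hx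
    exact ⟨a, rfl⟩
  choose g hg using he
  refine ⟨⟨⟨g, fun a => ⟨f a, ⟨a, trivial, rfl⟩⟩,
    fun x => Subtype.ext (hg x), fun a => hf (hg _)⟩, ?_⟩⟩
  intro x y
  show H.Adj (g x) (g y) ↔ ((⊤ : H.Subgraph).map f).coe.Adj x y
  constructor
  · intro h
    exact ⟨g x, g y, h, hg x, hg y⟩
  · rintro ⟨a, b, hab, ha, hb⟩
    have hax : g x = a := hf ((hg x).trans ha.symm)
    have hby : g y = b := hf ((hg y).trans hb.symm)
    rw [hax, hby]
    exact hab

lemma chord_copy {V : Type*} {G : SimpleGraph V} {u v a b : V} (hne : u ≠ v) (hab : a ≠ b)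
    (hua : G.Adj u a) (hva : G.Adj v a) (hub : G.Adj u b) (hvb : G.Adj v b) :
    ∃ Wc : (G ⊔ SimpleGraph.fromEdgeSet {s(u, v)}).Subgraph,
      IsCopy diamond Wc ∧ Wc.verts = {a, b, u, v} := by
  have hau : a ≠ u := fun h => G.irrefl (h ▸ hua)
  have hav : a ≠ v := fun h => G.irrefl (h ▸ hva)
  have hbu : b ≠ u := fun h => G.irrefl (h ▸ hub)
  have hbv : b ≠ v := fun h => G.irrefl (h ▸ hvb)
  have hmap : ∀ {i j : Fin 4}, diamond.Adj i j →
      (G ⊔ SimpleGraph.fromEdgeSet {s(u, v)}).Adj (![a, b, u, v] i) (![a, b, u, v] j) := by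
    intro i j hd
    fin_cases i <;> fin_cases j <;>
      first
        | exact absurd hd (by decide)
        | exact Or.inl hua.symm
        | exact Or.inl hua
        | exact Or.inl hva.symm
        | exact Or.inl hva
        | exact Or.inl hub.symm
        | exact Or.inl hub
        | exact Or.inl hvb.symm
        | exact Or.inl hvb
        | exact Or.inr ⟨rfl, hne⟩
        | exact Or.inr ⟨Sym2.eq_swap, hne.symm⟩
  have hinj : Function.Injective ![a, b, u, v] := by
    intro i j h
    fin_cases i <;> fin_cases j <;>
      first
        | rfl
        | exact absurd h hab
        | exact absurd h.symm hab
        | exact absurd h hau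
        | exact absurd h.symm hau
        | exact absurd h hav
        | exact absurd h.symm hav
        | exact absurd h hbu
        | exact absurd h.symm hbu
        | exact absurd h hbv
        | exact absurd h.symm hbv
        | exact absurd h hne
        | exact absurd h.symm hne
  refine ⟨(⊤ : diamond.Subgraph).map ⟨![a, b, u, v], hmap⟩, isCopy_map _ hinj, ?_⟩
  ext x
  simp only [Subgraph.map_verts, Subgraph.verts_top, Set.image_univ, Set.mem_range]
  constructor
  · rintro ⟨i, rfl⟩
    fin_cases i
    · exact Set.mem_insert _ _
    · exact Set.mem_insert_of_mem _ (Set.mem_insert _ _)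
    · exact Set.mem_insert_of_mem _ (Set.mem_insert_of_mem _ (Set.mem_insert _ _))
    · exact Set.mem_insert_of_mem _ (Set.mem_insert_of_mem _ (Set.mem_insert_of_mem _ rfl))
  · intro hx
    rcases hx with rfl | rfl | rfl | rfl
    · exact ⟨0, rfl⟩
    · exact ⟨1, rfl⟩
    · exact ⟨2, rfl⟩
    · exact ⟨3, rfl⟩

theorem stmt1 {V : Type*} [Fintype V] (G : SimpleGraph V)
    (hcard : 4 ≤ Fintype.card V) (hsat : UniquelySaturated diamond G)
    (u v : V) (hne : u ≠ v) (hnadj : ¬ G.Adj u v) :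
    G.dist u v = 2 ∧
      ((G.neighborSet u ∩ G.neighborSet v).ncard = 1 ∨
        (G.neighborSet u ∩ G.neighborSet v).ncard = 2) := by
  classical
  obtain ⟨W, hW, huniq⟩ := hsat.2 u v hne hnadj
  -- every edge of W other than s(u,v) is an edge of G
  have hWedge : ∀ {x y : V}, W.Adj x y → ¬(s(x, y) = s(u, v)) → G.Adj x y := by
    intro x y hxy hs
    rcases W.adj_sub hxy with h | h
    · exact h
    · exact absurd (Set.mem_singleton_iff.mp h.1) hs
  -- W contains the edge uv
  have hWuv : W.Adj u v := by
    by_contra h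
    have hsub : ∀ {x y : V}, W.Adj x y → G.Adj x y := by
      intro x y hxy
      refine hWedge hxy fun hs => ?_
      rcases Sym2.eq_iff.mp hs with ⟨rfl, rfl⟩ | ⟨rfl, rfl⟩
      · exact h hxy
      · exact h hxy.symm
    obtain ⟨φ⟩ := hW
    exact hsat.1 ⟨W.verts, W.Adj, fun hxy => hsub hxy, W.edge_vert, W.symm⟩ ⟨φ⟩
  obtain ⟨φ⟩ := hW
  -- find a common neighbor of u and v
  have hu : u ∈ W.verts := W.edge_vert hWuv
  have hv : v ∈ W.verts := W.edge_vert hWuv.symm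
  have hadj : diamond.Adj (φ ⟨u, hu⟩) (φ ⟨v, hv⟩) := φ.map_rel_iff.mpr hWuv
  obtain ⟨k, hk1, hk2⟩ := diamond_triangle _ _ hadj
  obtain ⟨hGuw, hGvw⟩ : G.Adj u ((φ.symm k : W.verts) : V) ∧ G.Adj v ((φ.symm k : W.verts) : V) := by
    have hWuw : W.Adj u ((φ.symm k : W.verts) : V) := by
      have : W.coe.Adj ⟨u, hu⟩ (φ.symm k) := by
        rw [← φ.map_rel_iff]
        simpa using hk1
      exact this
    have hWvw : W.Adj v ((φ.symm k : W.verts) : V) := by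
      have : W.coe.Adj ⟨v, hv⟩ (φ.symm k) := by
        rw [← φ.map_rel_iff]
        simpa using hk2
      exact this
    have hwu : ((φ.symm k : W.verts) : V) ≠ u := (W.adj_sub hWuw).ne'
    have hwv : ((φ.symm k : W.verts) : V) ≠ v := (W.adj_sub hWvw).ne'
    constructor
    · refine hWedge hWuw fun hs => ?_
      rcases Sym2.eq_iff.mp hs with ⟨h1, h2⟩ | ⟨h1, h2⟩
      · exact hwv h2
      · exact hne h1
    · refine hWedge hWvw fun hs => ?_
      rcases Sym2.eq_iff.mp hs with ⟨h1, h2⟩ | ⟨h1, h2⟩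
      · exact hne h1.symm
      · exact hwu h2
  set w : V := ((φ.symm k : W.verts) : V)
  -- distance
  have hdist : G.dist u v = 2 := by
    have hle : G.dist u v ≤ 2 := by
      have := G.dist_le (Walk.cons hGuw (Walk.cons hGvw.symm Walk.nil))
      simpa using this
    have h0 : G.dist u v ≠ 0 := by
      intro hh
      rcases dist_eq_zero_iff_eq_or_not_reachable.mp hh with h | h
      · exact hne h
      · exact h ⟨Walk.cons hGuw (Walk.cons hGvw.symm Walk.nil)⟩
    have h1 : G.dist u v ≠ 1 := fun h => hnadj (dist_eq_one_iff_adj.mp h)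
    omega
  refine ⟨hdist, ?_⟩
  set S := G.neighborSet u ∩ G.neighborSet v with hSdef
  have hSfin : S.Finite := Set.toFinite _
  have hS1 : 1 ≤ S.ncard := (Set.ncard_pos hSfin).mpr ⟨w, hGuw, hGvw⟩
  have hS2 : S.ncard ≤ 2 := by
    by_contra h
    push_neg at h
    obtain ⟨a, b, c, ha, hb, hc, hab, hac, hbc⟩ := (Set.two_lt_ncard_iff hSfin).mp h
    obtain ⟨W1, hW1copy, hW1verts⟩ := chord_copy (G := G) hne hab ha.1 ha.2 hb.1 hb.2
    obtain ⟨W2, hW2copy, hW2verts⟩ := chord_copy (G := G) hne hac ha.1 ha.2 hc.1 hc.2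
    have e1 : W1 = W := huniq W1 hW1copy
    have e2 : W2 = W := huniq W2 hW2copy
    have hvv : W1.verts = W2.verts := by rw [e1, e2]
    rw [hW1verts, hW2verts] at hvv
    have hbmem : b ∈ ({a, c, u, v} : Set V) := by
      rw [← hvv]; simp
    have hbu : b ≠ u := fun h' => G.irrefl (h' ▸ hb.1)
    have hbv : b ≠ v := fun h' => G.irrefl (h' ▸ hb.2)
    rcases hbmem with h' | h' | h' | h'
    · exact hab h'.symm
    · exact hbc h'
    · exact hbu h'
    · exact hbv h'
  omega
end

section
/- Let G be a uniquely C4+-saturated graph. Then G contains no subgraph isomorphic to the bowknot graph (two triangles sharing exactly one vertex), no subgraph isomorphic to the house graph (a 5-cycle with one chord), and no subgraph isomorphic to K_{2,3}. -/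
open SimpleGraph

/-- The bowknot graph: two triangles sharing exactly one vertex. -/
def bowknot : SimpleGraph (Fin 5) :=
  SimpleGraph.fromEdgeSet {s(0, 1), s(0, 2), s(1, 2), s(2, 3), s(2, 4), s(3, 4)}

/-- The house graph: a `5`-cycle with one chord. -/
def house : SimpleGraph (Fin 5) :=
  SimpleGraph.fromEdgeSet {s(0, 1), s(1, 2), s(2, 3), s(3, 4), s(4, 0), s(1, 4)}

/-!
Each of the bowknot, the house and `K_{2,3}` has two nonadjacent vertices whose joining creates
two diamonds on different vertex sets. In a uniquely diamond-saturated graph `G` the images of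
these two vertices under a copy are distinct, and joining them creates (the images of) both
diamonds. That contradicts uniqueness if they are nonadjacent in `G`, and `G` being diamond-free
if they are adjacent.
-/

section Saturation

variable {U V W : Type*} {G : SimpleGraph V} {H : SimpleGraph W} {K : SimpleGraph U}

lemma isCopy_toSubgraph (f : Copy H G) : IsCopy H f.toSubgraph :=
  ⟨f.isoToSubgraph.symm⟩

lemma forall_not_isCopy_iff_free : (∀ G' : G.Subgraph, ¬ IsCopy H G') ↔ H.Free G := by
  simp only [Free, isContained_iff_exists_iso_subgraph, not_exists, IsCopy]
  exact forall_congr' fun G' => not_congr ⟨fun ⟨e⟩ => ⟨e.symm⟩, fun ⟨e⟩ => ⟨e.symm⟩⟩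

def SimpleGraph.Copy.supEdge (f : Copy H G) (i j : W) :
    Copy (H ⊔ edge i j) (G ⊔ edge (f i) (f j)) where
  toHom := ⟨f, fun {a b} hab => by
    rcases hab with hab | hab
    · exact Or.inl (f.toHom.map_adj hab)
    · refine Or.inr ?_
      rw [edge_adj] at hab ⊢
      refine ⟨?_, f.injective.ne hab.2⟩
      rcases hab.1 with ⟨rfl, rfl⟩ | ⟨rfl, rfl⟩ <;> simp⟩
  injective' := f.injective

namespace UniquelySaturated

lemma free_s2 (hsat : UniquelySaturated K G) : K.Free G :=
  forall_not_isCopy_iff_free.mp hsat.1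

lemma range_eq_of_copy_sup_edge (hsat : UniquelySaturated K G) {u v : V} (huv : u ≠ v)
    (f g : Copy K (G ⊔ edge u v)) : Set.range f = Set.range g := by
  by_cases hadj : G.Adj u v
  · exact (hsat.free_s2 (f.isContained.mono_right (sup_edge_of_adj G hadj).le)).elim
  obtain ⟨_, -, huniq⟩ := hsat.2 u v huv hadj
  have hfg : f.toSubgraph = g.toSubgraph :=
    (huniq _ (isCopy_toSubgraph f)).trans (huniq _ (isCopy_toSubgraph g)).symm
  simpa [Set.image_univ] using congrArg Subgraph.verts hfg

theorem free_of_copies_sup_edge (hsat : UniquelySaturated K G) {i j : W} (hij : i ≠ j)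
    (φ ψ : Copy K (H ⊔ edge i j)) (hφψ : Set.range φ ≠ Set.range ψ) : H.Free G := by
  rintro ⟨f⟩
  have h := hsat.range_eq_of_copy_sup_edge (f.injective.ne hij)
    ((f.supEdge i j).comp φ) ((f.supEdge i j).comp ψ)
  simp only [Copy.coe_comp, Set.range_comp] at h
  exact hφψ (Set.image_injective.mpr f.injective h)

end UniquelySaturated

end Saturation

section Diamond

variable {V : Type*} {G : SimpleGraph V}

/-- `diamond` misses only the edge `01`, so `![a, b, c, d]` spans a diamond with chord `cd`. -/
def diamondCopy {a b c d : V} (hinj : Function.Injective ![a, b, c, d])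
    (hadj : G.Adj a c ∧ G.Adj a d ∧ G.Adj b c ∧ G.Adj b d ∧ G.Adj c d) : Copy diamond G where
  toHom := ⟨![a, b, c, d], by
    obtain ⟨hac, had, hbc, hbd, hcd⟩ := hadj
    intro x y hxy
    fin_cases x <;> fin_cases y <;>
      simp_all [diamond, hac.symm, had.symm, hbc.symm, hbd.symm, hcd.symm]⟩
  injective' := hinj

@[simp]
lemma coe_diamondCopy {a b c d : V} (hinj : Function.Injective ![a, b, c, d])
    (hadj : G.Adj a c ∧ G.Adj a d ∧ G.Adj b c ∧ G.Adj b d ∧ G.Adj c d) :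
    ⇑(diamondCopy hinj hadj) = ![a, b, c, d] :=
  rfl

lemma bowknot_free_of_uniquelySaturated (hsat : UniquelySaturated diamond G) :
    bowknot.Free G :=
  hsat.free_of_copies_sup_edge (i := 0) (j := 3) (by decide)
    (diamondCopy (a := 1) (b := 3) (c := 0) (d := 2) (by decide) (by simp [bowknot, edge_adj]))
    (diamondCopy (a := 0) (b := 4) (c := 2) (d := 3) (by decide) (by simp [bowknot, edge_adj]))
    fun h => by simpa [Fin.exists_fin_succ] using h.le (Set.mem_range_self 0)

lemma house_free_of_uniquelySaturated (hsat : UniquelySaturated diamond G) :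
    house.Free G :=
  hsat.free_of_copies_sup_edge (i := 1) (j := 3) (by decide)
    (diamondCopy (a := 2) (b := 4) (c := 1) (d := 3) (by decide) (by simp [house, edge_adj]))
    (diamondCopy (a := 0) (b := 3) (c := 1) (d := 4) (by decide) (by simp [house, edge_adj]))
    fun h => by simpa [Fin.exists_fin_succ] using h.le (Set.mem_range_self 0)

lemma completeBipartiteGraph_two_three_free_of_uniquelySaturated
    (hsat : UniquelySaturated diamond G) : (completeBipartiteGraph (Fin 2) (Fin 3)).Free G :=
  hsat.free_of_copies_sup_edge (i := .inl 0) (j := .inl 1) (by decide)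
    (diamondCopy (a := .inr 0) (b := .inr 1) (c := .inl 0) (d := .inl 1) (by decide)
      (by simp [edge_adj]))
    (diamondCopy (a := .inr 0) (b := .inr 2) (c := .inl 0) (d := .inl 1) (by decide)
      (by simp [edge_adj]))
    fun h => by simpa [Fin.exists_fin_succ] using h.le (Set.mem_range_self 1)

end Diamond

theorem stmt2 {V : Type*} (G : SimpleGraph V) (hsat : UniquelySaturated diamond G) :
    (∀ G' : G.Subgraph, ¬ IsCopy bowknot G') ∧
      (∀ G' : G.Subgraph, ¬ IsCopy house G') ∧
      (∀ G' : G.Subgraph, ¬ IsCopy (completeBipartiteGraph (Fin 2) (Fin 3)) G') := by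
  simp only [forall_not_isCopy_iff_free]
  exact ⟨bowknot_free_of_uniquelySaturated hsat, house_free_of_uniquelySaturated hsat,
    completeBipartiteGraph_two_three_free_of_uniquelySaturated hsat⟩
end

section
/- Let G be a nontrivial uniquely C4+-saturated graph. Then the girth of G is 3 or 4. -/
/-!
A uniquely `C₄⁺`-saturated graph on at least four vertices is not complete (it would contain
`K₄ ⊇ C₄⁺`), so it has a non-edge `uv`, and `G + uv` contains a diamond. At most one edge of that
diamond is `uv`, and every edge of the diamond misses one of its two triangles or its 4-cycle,
so `G` itself contains a triangle or a 4-cycle.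
-/

open SimpleGraph

instance inst_s3 : DecidableRel diamond.Adj := by unfold diamond; infer_instance

/-- No edge of the diamond lies on both of its triangles `023`, `123` and on its 4-cycle `0213`. -/
lemma exists_cycleGraph_in_diamond_avoiding (e : Sym2 (Fin 4)) :
    ∃ n, 2 < n ∧ n ≤ 4 ∧ ∃ g : Fin n ↪ Fin 4,
      ∀ ⦃i j⦄, (cycleGraph n).Adj i j → diamond.Adj (g i) (g j) ∧ s(g i, g j) ≠ e := by
  by_cases h23 : e = s(2, 3)
  · refine ⟨4, by norm_num, le_rfl, ⟨![0, 2, 1, 3], by decide⟩, ?_⟩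
    subst h23
    decide
  by_cases h0 : e = s(0, 2) ∨ e = s(0, 3)
  · refine ⟨3, by norm_num, by norm_num, ⟨![1, 2, 3], by decide⟩, ?_⟩
    rcases h0 with rfl | rfl <;> decide
  · refine ⟨3, by norm_num, by norm_num, ⟨![0, 2, 3], by decide⟩, ?_⟩
    revert e
    decide

namespace SimpleGraph

variable {V W : Type*} {G : SimpleGraph V} {H : SimpleGraph W}

lemma isContained_iff_exists_isCopy : H ⊑ G ↔ ∃ G' : G.Subgraph, IsCopy H G' := by
  simp only [isContained_iff_exists_iso_subgraph, IsCopy]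
  exact exists_congr fun _ => ⟨fun ⟨e⟩ => ⟨e.symm⟩, fun ⟨e⟩ => ⟨e.symm⟩⟩

lemma UniquelySaturated.free (h : UniquelySaturated H G) : H.Free G := fun hH =>
  (isContained_iff_exists_isCopy.1 hH).elim h.1

lemma UniquelySaturated.isContained_sup_edge (h : UniquelySaturated H G) {u v : V} (huv : u ≠ v)
    (hadj : ¬ G.Adj u v) : H ⊑ G ⊔ edge u v :=
  isContained_iff_exists_isCopy.2 (h.2 u v huv hadj).exists

lemma exists_ne_not_adj_of_free [Fintype V] [Fintype W] (hcard : Fintype.card W ≤ Fintype.card V)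
    (h : H.Free G) : ∃ u v, u ≠ v ∧ ¬ G.Adj u v := by
  by_contra! hG
  have hH : H ⊑ (⊤ : SimpleGraph V) :=
    (IsContained.of_le le_top).trans <| isContained_top_iff.2 <|
      Function.Embedding.nonempty_of_card_le hcard
  exact h <| hH.mono_right fun u v huv => hG u v huv

lemma adj_of_adj_sup_edge {u v x y : V} (h : (G ⊔ edge u v).Adj x y) (hne : s(x, y) ≠ s(u, v)) :
    G.Adj x y := by
  rcases h with h | h
  · exact h
  · exact absurd ((adj_edge _ _).1 h).1.symm hne

lemma exists_cycleGraph_isContained_of_diamond_isContained_sup_edge {u v : V}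
    (h : diamond ⊑ G ⊔ edge u v) : ∃ n, 2 < n ∧ n ≤ 4 ∧ cycleGraph n ⊑ G := by
  obtain ⟨f, hf⟩ := isContained_iff_exists_le_comap.1 h
  obtain ⟨e, he⟩ : ∃ e : Sym2 (Fin 4), ∀ e', e'.map f = s(u, v) → e' = e := by
    by_cases hex : ∃ e : Sym2 (Fin 4), e.map f = s(u, v)
    · obtain ⟨e, he⟩ := hex
      exact ⟨e, fun e' he' => Sym2.map.injective f.injective (he'.trans he.symm)⟩
    · exact ⟨s(0, 0), fun e' he' => absurd ⟨e', he'⟩ hex⟩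
  obtain ⟨n, hn3, hn4, g, hg⟩ := exists_cycleGraph_in_diamond_avoiding e
  refine ⟨n, hn3, hn4, isContained_iff_exists_le_comap.2 ⟨g.trans f, fun i j hij => ?_⟩⟩
  obtain ⟨hadj, hne⟩ := hg hij
  show G.Adj (f (g i)) (f (g j))
  exact adj_of_adj_sup_edge (hf hadj) fun h' => hne (he _ h')

lemma girth_mem_Icc_of_cycleGraph_isContained {n : ℕ} (hn : 2 < n) (h : cycleGraph n ⊑ G) :
    G.girth ∈ Set.Icc 3 n := by
  obtain ⟨a, w, hw, rfl⟩ := (cycleGraph_isContained_iff hn).1 h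
  exact ⟨three_le_girth fun hG => hG w hw, girth_le_length hw⟩

end SimpleGraph

theorem stmt3 {V : Type*} [Fintype V] (G : SimpleGraph V)
    (hcard : 4 ≤ Fintype.card V) (hsat : UniquelySaturated diamond G) :
    G.girth = 3 ∨ G.girth = 4 := by
  obtain ⟨u, v, huv, hadj⟩ :=
    exists_ne_not_adj_of_free ((Fintype.card_fin 4).trans_le hcard) hsat.free
  obtain ⟨n, hn3, hn4, hcycle⟩ :=
    exists_cycleGraph_isContained_of_diamond_isContained_sup_edge
      (hsat.isContained_sup_edge huv hadj)
  obtain ⟨hgirth3, hgirthn⟩ := girth_mem_Icc_of_cycleGraph_isContained hn3 hcycle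
  omega
end

section
/- Let G be a uniquely C4+-saturated graph on n vertices with exactly k triangles, k >= 2, and let A be the set of all vertices in triangles of G. Let t = min over u in N(A) of (k - |N(u) ∩ A|). Then n <= k²/2 + (10t+5)k/2 + (25t² + 7t)/2 + 1. -/
open SimpleGraph

/-- The set of vertices belonging to some triangle of `G`. -/
def triangleVerts {V : Type*} (G : SimpleGraph V) : Set V :=
  {v | ∃ a b, G.Adj v a ∧ G.Adj v b ∧ G.Adj a b}

/-!
Since `G` is diamond-free and every non-edge `uz` creates exactly one diamond, the diamond of
`G + uz` has `uz` either as its chord (then `u, z` have exactly two common neighbours) or as a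
side (then one of `u, z` lies in a triangle containing a neighbour of the other). Comparing two
diamonds of `G + uz` shows that triangles are vertex-disjoint, that non-adjacent vertices have at
most two common neighbours, and that if a vertex `u ∉ A` is adjacent to a vertex `a` of a
triangle, then `a` is the only neighbour of `u` adjacent to another vertex of that triangle.

For `u ∉ A` with `d` neighbours, `c` of them in `A`, this partitions `V` into `u`, `N(u)`, the
non-neighbours sharing two neighbours with `u` (in bijection with the pairs in `N(u)`) and the
`2c` triangle-mates of the vertices of `N(u) ∩ A`; so `n = 1 + d + C(d, 2) + 2c`. If `c > 0`,
comparing this identity at `u` and at a neighbour `w ∉ A` shows that `w` is adjacent to a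
triangle, which then contains no neighbour of `u`. Each of the `3(k - c)` vertices of such
triangles has at most two neighbours in `N(u)`, so `d ≤ c + 6(k - c)`; for the `u` attaining `t`
this gives the bound. If no vertex outside `A` sees `A`, every vertex lies in a triangle and
`n ≤ 3k`.
-/

section

variable {V W : Type*}

/-- `a b` is the chord and `c d` the non-adjacent pair; `IsDiamond.copy` sends the vertices
`0, 1, 2, 3` of `diamond` to `c, d, a, b`. -/
structure IsDiamond (H : SimpleGraph V) (a b c d : V) : Prop where
  adj_ab : H.Adj a b
  adj_ac : H.Adj a c
  adj_ad : H.Adj a d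
  adj_bc : H.Adj b c
  adj_bd : H.Adj b d
  ne_cd : c ≠ d

namespace IsDiamond

variable {H : SimpleGraph V} {a b c d : V}

def copy (h : IsDiamond H a b c d) : Copy diamond H where
  toHom := ⟨![c, d, a, b], fun {i j} hij => by
    obtain ⟨hab, hac, had, hbc, hbd, -⟩ := h
    fin_cases i <;> fin_cases j <;> simp_all [diamond, H.adj_comm]⟩
  injective' i j hij := by
    obtain ⟨hab, hac, had, hbc, hbd, hcd⟩ := h
    fin_cases i <;> fin_cases j <;>
      simp_all [hab.ne, hac.ne, had.ne, hbc.ne, hbd.ne, hab.ne', hac.ne', had.ne', hbc.ne',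
        hbd.ne', hcd.symm]

lemma range_copy (h : IsDiamond H a b c d) : Set.range h.copy = {a, b, c, d} := by
  ext x
  simp only [copy, Set.mem_range, Fin.exists_fin_succ, Fin.isValue, Fin.succ_zero_eq_one,
    Fin.succ_one_eq_two, Fin.reduceSucc, IsEmpty.exists_iff, or_false, Set.mem_insert_iff,
    Set.mem_singleton_iff]
  tauto

end IsDiamond

lemma SimpleGraph.Copy.isDiamond {H : SimpleGraph V} (f : Copy diamond H) :
    IsDiamond H (f 2) (f 3) (f 0) (f 1) := by
  have adj : ∀ i j : Fin 4, diamond.Adj i j → H.Adj (f i) (f j) :=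
    fun _ _ h => f.toHom.map_adj h
  refine ⟨adj 2 3 ?_, adj 2 0 ?_, adj 2 1 ?_, adj 3 0 ?_, adj 3 1 ?_,
    f.injective.ne (by decide)⟩ <;> simp [diamond]

lemma isCopy_iff_exists_copy {A : SimpleGraph W} {H : SimpleGraph V} {C : H.Subgraph} :
    IsCopy A C ↔ ∃ f : Copy A H, f.toSubgraph = C := by
  rw [IsCopy, ← Set.mem_range, Copy.range_toSubgraph]
  exact ⟨fun ⟨e⟩ => ⟨e.symm⟩, fun ⟨e⟩ => ⟨e.symm⟩⟩

section SupEdge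

variable {G : SimpleGraph V} {u z x y : V}

lemma adj_sup_edge_iff : (G ⊔ edge u z).Adj x y ↔
    G.Adj x y ∨ x ≠ y ∧ (x = u ∧ y = z ∨ x = z ∧ y = u) := by
  rw [sup_adj, edge_adj]; tauto

lemma adj_sup_edge_self (hne : u ≠ z) : (G ⊔ edge u z).Adj u z :=
  adj_sup_edge_iff.2 (Or.inr ⟨hne, Or.inl ⟨rfl, rfl⟩⟩)

end SupEdge

lemma exists_mem_triangleVerts_of_ncard_cliqueSet_ne_zero {G : SimpleGraph V}
    (h : (G.cliqueSet 3).ncard ≠ 0) : ∃ a, a ∈ triangleVerts G := by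
  classical
  obtain ⟨T, hT⟩ := Set.nonempty_of_ncard_ne_zero h
  obtain ⟨a, b, c, hab, hac, hbc, -⟩ := is3Clique_iff.1 hT
  exact ⟨a, b, c, hab, hac, hbc⟩

namespace UniquelySaturated

variable {G : SimpleGraph V} {u v z a b c d a' b' c' d' p q r x y : V}
  (hsat : UniquelySaturated diamond G)
include hsat

lemma not_isDiamond : ¬ IsDiamond G a b c d :=
  fun h => hsat.1 _ (isCopy_iff_exists_copy.2 ⟨h.copy, rfl⟩)

lemma exists_isDiamond (hne : u ≠ z) (hnadj : ¬ G.Adj u z) :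
    ∃ a b c d, IsDiamond (G ⊔ edge u z) a b c d := by
  obtain ⟨C, hC, -⟩ := hsat.2 u z hne hnadj
  obtain ⟨f, -⟩ := isCopy_iff_exists_copy.1 hC
  exact ⟨_, _, _, _, f.isDiamond⟩

lemma verts_eq_of_isDiamond (hne : u ≠ z) (hnadj : ¬ G.Adj u z)
    (h : IsDiamond (G ⊔ edge u z) a b c d) (h' : IsDiamond (G ⊔ edge u z) a' b' c' d') :
    ({a, b, c, d} : Set V) = {a', b', c', d'} := by
  obtain ⟨C, -, hC⟩ := hsat.2 u z hne hnadj
  have hcopy := (hC _ (isCopy_iff_exists_copy.2 ⟨h.copy, rfl⟩)).trans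
    (hC _ (isCopy_iff_exists_copy.2 ⟨h'.copy, rfl⟩)).symm
  rw [← h.range_copy, ← h'.range_copy]
  have hverts := congrArg Subgraph.verts hcopy
  simp only [Subgraph.map_verts, Subgraph.verts_top, Set.image_univ] at hverts
  exact hverts

/-- The new edge `uz` is the chord or a side of the diamond it creates. -/
lemma exists_common_neighbors_or_triangle (hne : u ≠ z) (hnadj : ¬ G.Adj u z) :
    (∃ p q, p ≠ q ∧ G.Adj u p ∧ G.Adj u q ∧ G.Adj z p ∧ G.Adj z q) ∨
    (∃ s m, G.Adj u s ∧ G.Adj u m ∧ G.Adj s m ∧ G.Adj z s) ∨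
    (∃ s m, G.Adj z s ∧ G.Adj z m ∧ G.Adj s m ∧ G.Adj u s) := by
  obtain ⟨a, b, c, d, ⟨hab, hac, had, hbc, hbd, hcd⟩⟩ := hsat.exists_isDiamond hne hnadj
  have hG : ¬ IsDiamond G a b c d := hsat.not_isDiamond
  rw [adj_sup_edge_iff] at hab hac had hbc hbd
  rcases hab with hab | ⟨-, hab⟩ <;> rcases hac with hac | ⟨-, hac⟩ <;>
    rcases had with had | ⟨-, had⟩ <;> rcases hbc with hbc | ⟨-, hbc⟩ <;>
    rcases hbd with hbd | ⟨-, hbd⟩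
  · exact absurd ⟨hab, hac, had, hbc, hbd, hcd⟩ hG
  all_goals grind [SimpleGraph.Adj.ne, SimpleGraph.adj_comm]

lemma eq_of_three_common_neighbors (hne : u ≠ z) (hnadj : ¬ G.Adj u z)
    (hup : G.Adj u p) (hzp : G.Adj z p) (huq : G.Adj u q) (hzq : G.Adj z q)
    (hur : G.Adj u r) (hzr : G.Adj z r) (hpq : p ≠ q) (hpr : p ≠ r) : q = r := by
  have lift : G ≤ G ⊔ edge u z := le_sup_left
  have hverts := hsat.verts_eq_of_isDiamond hne hnadj
    ⟨adj_sup_edge_self hne, lift hup, lift huq, lift hzp, lift hzq, hpq⟩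
    ⟨adj_sup_edge_self hne, lift hup, lift hur, lift hzp, lift hzr, hpr⟩
  have hq : q ∈ ({u, z, p, r} : Set V) := hverts ▸ by simp
  simp only [Set.mem_insert_iff, Set.mem_singleton_iff] at hq
  rcases hq with rfl | rfl | rfl | rfl
  exacts [(G.irrefl huq).elim, (G.irrefl hzq).elim, (hpq rfl).elim, rfl]

lemma eq_of_adj_of_triangle (hu : u ∉ triangleVerts G) (hab : G.Adj a b) (hac : G.Adj a c)
    (hbc : G.Adj b c) (hua : G.Adj u a) (hup : G.Adj u p) (hpb : G.Adj p b) : p = a := by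
  by_contra hpa
  have hub : ¬ G.Adj u b := fun h => hu ⟨a, b, hua, h, hab⟩
  have huc : ¬ G.Adj u c := fun h => hu ⟨a, c, hua, h, hac⟩
  have hub' : u ≠ b := by
    rintro rfl; exact hu ⟨a, c, hab.symm, hbc, hac⟩
  have huc' : u ≠ c := by
    rintro rfl; exact hu ⟨a, b, hac.symm, hbc.symm, hab⟩
  have lift : G ≤ G ⊔ edge u b := le_sup_left
  have hverts := hsat.verts_eq_of_isDiamond hub' hub
    ⟨lift hab.symm, (adj_sup_edge_self hub').symm, lift hbc, lift hua.symm, lift hac, huc'⟩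
    ⟨adj_sup_edge_self hub', lift hua, lift hup, lift hab.symm, lift hpb.symm, Ne.symm hpa⟩
  have hc : c ∈ ({u, b, a, p} : Set V) := hverts ▸ by simp
  simp only [Set.mem_insert_iff, Set.mem_singleton_iff] at hc
  rcases hc with rfl | rfl | rfl | rfl
  exacts [huc' rfl, G.irrefl hbc, G.irrefl hac, huc hup]

lemma eq_or_eq_of_triangle (hva : G.Adj v a) (hvb : G.Adj v b) (hab : G.Adj a b)
    (hvx : G.Adj v x) (hvy : G.Adj v y) (hxy : G.Adj x y) : x = a ∨ x = b := by
  by_contra! hx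
  have hax : ¬ G.Adj a x := fun h => hsat.not_isDiamond ⟨hva, hvb, hvx, hab, h, hx.2.symm⟩
  have hya : y ≠ a := by
    rintro rfl; exact hax hxy.symm
  have hax' : a ≠ x := Ne.symm hx.1
  have lift : G ≤ G ⊔ edge a x := le_sup_left
  have hverts := hsat.verts_eq_of_isDiamond hax' hax
    ⟨lift hva.symm, adj_sup_edge_self hax', lift hab, lift hvx, lift hvb, hx.2⟩
    ⟨lift hvx.symm, (adj_sup_edge_self hax').symm, lift hxy, lift hva, lift hvy, hya.symm⟩
  have hb : b ∈ ({x, v, a, y} : Set V) := hverts ▸ by simp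
  simp only [Set.mem_insert_iff, Set.mem_singleton_iff] at hb
  rcases hb with rfl | rfl | rfl | rfl
  · exact hx.2 rfl
  · exact G.irrefl hvb
  · exact G.irrefl hab
  · exact hsat.not_isDiamond ⟨hvb, hva, hvx, hab.symm, hxy.symm, hx.1.symm⟩

lemma exists_common_neighbor_ne (hu : u ∉ triangleVerts G) (hup : G.Adj u p)
    (huq : G.Adj u q) (hpq : p ≠ q) : ∃ x, x ≠ u ∧ G.Adj p x ∧ G.Adj q x := by
  have hnpq : ¬ G.Adj p q := fun h => hu ⟨p, q, hup, huq, h⟩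
  rcases hsat.exists_common_neighbors_or_triangle hpq hnpq with
    ⟨α, β, hαβ, hpα, hpβ, hqα, hqβ⟩ | ⟨s, m, hps, hpm, hsm, hqs⟩ |
    ⟨s, m, hqs, hqm, hsm, hps⟩
  · by_cases hαu : α = u
    · exact ⟨β, hαu ▸ Ne.symm hαβ, hpβ, hqβ⟩
    · exact ⟨α, hαu, hpα, hqα⟩
  · refine ⟨s, ?_, hps, hqs⟩
    rintro rfl; exact hu ⟨p, m, hup, hsm, hpm⟩
  · refine ⟨s, ?_, hps, hqs⟩
    rintro rfl; exact hu ⟨q, m, huq, hsm, hqm⟩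

lemma exists_notMem_adj_mem_triangleVerts (ha : a ∈ triangleVerts G)
    (hv : v ∉ triangleVerts G) :
    ∃ u, u ∉ triangleVerts G ∧ ∃ b ∈ triangleVerts G, G.Adj u b := by
  by_cases h : ∃ b ∈ triangleVerts G, G.Adj v b
  · exact ⟨v, hv, h⟩
  replace h : ∀ b ∈ triangleVerts G, ¬ G.Adj v b := fun b hb hvb => h ⟨b, hb, hvb⟩
  have hva : v ≠ a := by
    rintro rfl; exact hv ha
  rcases hsat.exists_common_neighbors_or_triangle hva (h a ha) with
    ⟨p, q, -, hvp, -, hap, -⟩ | ⟨s, m, hvs, hvm, hsm, -⟩ | ⟨s, m, has, ham, hsm, hvs⟩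
  · exact ⟨p, fun hp => h p hp hvp, a, ha, hap.symm⟩
  · exact absurd ⟨s, m, hvs, hvm, hsm⟩ hv
  · exact absurd hvs (h s ⟨a, m, has.symm, hsm, ham⟩)

end UniquelySaturated

lemma two_mul_le_of_le_add_six_mul {n d c t : ℕ} (hn : n = 1 + d + d.choose 2 + 2 * c)
    (hd : d ≤ c + 6 * t) :
    2 * n ≤ (c + t) ^ 2 + (10 * t + 5) * (c + t) + 25 * t ^ 2 + 7 * t + 2 := by
  have hchoose : 2 * d.choose 2 + d = d * d := by
    rw [Nat.choose_two_right, Nat.two_mul_div_two_of_even (Nat.even_mul_pred_self d)]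
    rcases d with _ | d
    · rfl
    · rw [Nat.add_sub_cancel]; ring
  have hsq : d * d ≤ (c + 6 * t) * (c + 6 * t) := Nat.mul_le_mul hd hd
  nlinarith

section Counting

open Finset
open scoped Classical

variable [Fintype V] {G : SimpleGraph V} {u w x y z s a b : V} {T : Finset V}

noncomputable def triangleMates (G : SimpleGraph V) (s : V) : Finset V :=
  {x | ∃ m, G.Adj s x ∧ G.Adj s m ∧ G.Adj x m}

noncomputable def triangleNeighborFinset (G : SimpleGraph V) (u : V) : Finset V :=
  {x ∈ G.neighborFinset u | x ∈ triangleVerts G}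

noncomputable def c4Opposites (G : SimpleGraph V) (u : V) : Finset V :=
  {z | z ≠ u ∧ ¬ G.Adj u z ∧ 2 ≤ #(G.neighborFinset u ∩ G.neighborFinset z)}

lemma mem_triangleMates :
    x ∈ triangleMates G s ↔ ∃ m, G.Adj s x ∧ G.Adj s m ∧ G.Adj x m := by
  simp [triangleMates]

lemma mem_triangleNeighborFinset :
    x ∈ triangleNeighborFinset G u ↔ G.Adj u x ∧ x ∈ triangleVerts G := by
  simp [triangleNeighborFinset]

lemma mem_c4Opposites : z ∈ c4Opposites G u ↔
    z ≠ u ∧ ¬ G.Adj u z ∧ 2 ≤ #(G.neighborFinset u ∩ G.neighborFinset z) := by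
  simp [c4Opposites]

lemma mem_triangleVerts_of_mem_triangleMates (h : x ∈ triangleMates G s) :
    x ∈ triangleVerts G := by
  obtain ⟨m, hsx, hsm, hxm⟩ := mem_triangleMates.1 h
  exact ⟨s, m, hsx.symm, hxm, hsm⟩

lemma coe_triangleNeighborFinset :
    (triangleNeighborFinset G u : Set V) = G.neighborSet u ∩ triangleVerts G := by
  simp [triangleNeighborFinset, coe_filter, Set.ext_iff]

lemma mem_triangleVerts_of_mem_cliqueFinset (hT : T ∈ G.cliqueFinset 3) (hx : x ∈ T) :
    x ∈ triangleVerts G := by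
  obtain ⟨a, b, c, hab, hac, hbc, rfl⟩ := is3Clique_iff.1 (mem_cliqueFinset_iff.1 hT)
  simp only [mem_insert, mem_singleton] at hx
  rcases hx with rfl | rfl | rfl
  exacts [⟨b, c, hab, hac, hbc⟩, ⟨a, c, hab.symm, hbc, hac⟩,
    ⟨a, b, hac.symm, hbc.symm, hab⟩]

lemma card_le_three_mul_card_cliqueFinset (h : ∀ v, v ∈ triangleVerts G) :
    Fintype.card V ≤ 3 * #(G.cliqueFinset 3) := by
  have hcover : (univ : Finset V) ⊆ (G.cliqueFinset 3).biUnion id := by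
    intro v _
    obtain ⟨a, b, hva, hvb, hab⟩ := h v
    exact mem_biUnion.2 ⟨{v, a, b}, mem_cliqueFinset_iff.2 (is3Clique_triple_iff.2
      ⟨hva, hvb, hab⟩), mem_insert_self _ _⟩
  calc Fintype.card V ≤ #((G.cliqueFinset 3).biUnion id) := card_le_card hcover
    _ ≤ #(G.cliqueFinset 3) * 3 :=
      card_biUnion_le_card_mul _ _ _ fun T hT => (mem_cliqueFinset_iff.1 hT).card_eq.le
    _ = 3 * #(G.cliqueFinset 3) := mul_comm _ _

namespace UniquelySaturated

variable (hsat : UniquelySaturated diamond G)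
include hsat

lemma card_inter_neighborFinset_le_two (hne : u ≠ z) (hnadj : ¬ G.Adj u z) :
    #(G.neighborFinset u ∩ G.neighborFinset z) ≤ 2 := by
  by_contra! h
  obtain ⟨p, hp, q, hq, r, hr, hpq, hpr, hqr⟩ := two_lt_card.1 h
  simp only [mem_inter, mem_neighborFinset] at hp hq hr
  exact hqr (hsat.eq_of_three_common_neighbors hne hnadj hp.1 hp.2 hq.1 hq.2 hr.1 hr.2 hpq hpr)

lemma triangleMates_eq (hsa : G.Adj s a) (hsb : G.Adj s b) (hab : G.Adj a b) :
    triangleMates G s = {a, b} := by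
  ext x
  rw [mem_triangleMates, mem_insert, mem_singleton]
  constructor
  · rintro ⟨m, hsx, hsm, hxm⟩
    exact hsat.eq_or_eq_of_triangle hsa hsb hab hsx hsm hxm
  · rintro (rfl | rfl)
    exacts [⟨b, hsa, hsb, hab⟩, ⟨a, hsb, hsa, hab.symm⟩]

lemma card_triangleMates (hs : s ∈ triangleVerts G) : #(triangleMates G s) = 2 := by
  obtain ⟨a, b, hsa, hsb, hab⟩ := hs
  rw [hsat.triangleMates_eq hsa hsb hab, card_pair hab.ne]

lemma insert_triangleMates_mem_cliqueFinset (hs : s ∈ triangleVerts G) :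
    insert s (triangleMates G s) ∈ G.cliqueFinset 3 := by
  obtain ⟨a, b, hsa, hsb, hab⟩ := hs
  rw [hsat.triangleMates_eq hsa hsb hab, mem_cliqueFinset_iff, is3Clique_triple_iff]
  exact ⟨hsa, hsb, hab⟩

lemma eq_insert_triangleMates (hT : T ∈ G.cliqueFinset 3) (hx : x ∈ T) :
    T = insert x (triangleMates G x) := by
  obtain ⟨a, b, c, hab, hac, hbc, rfl⟩ := is3Clique_iff.1 (mem_cliqueFinset_iff.1 hT)
  simp only [mem_insert, mem_singleton] at hx
  rcases hx with rfl | rfl | rfl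
  · rw [hsat.triangleMates_eq hab hac hbc]
  · rw [hsat.triangleMates_eq hab.symm hbc hac, insert_comm]
  · rw [hsat.triangleMates_eq hac.symm hbc.symm hab]
    ext
    simp only [mem_insert, mem_singleton]
    tauto

variable (hu : u ∉ triangleVerts G)
include hu

lemma card_biUnion_triangleMates :
    #((G.neighborFinset u).biUnion (triangleMates G)) = 2 * #(triangleNeighborFinset G u) := by
  have hdisj : (G.neighborFinset u : Set V).PairwiseDisjoint (triangleMates G) := by
    intro s hs s' hs' hne
    rw [Function.onFun, Finset.disjoint_left]
    intro x hx hx'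
    obtain ⟨m, hsx, hsm, hxm⟩ := mem_triangleMates.1 hx
    obtain ⟨m', hs'x, hs'm', hxm'⟩ := mem_triangleMates.1 hx'
    rcases hsat.eq_or_eq_of_triangle hsx.symm hxm hsm hs'x.symm hxm' hs'm' with rfl | rfl
    · exact hne rfl
    · simp only [coe_neighborFinset, mem_neighborSet] at hs hs'
      exact hu ⟨s, s', hs, hs', hsm⟩
  calc #((G.neighborFinset u).biUnion (triangleMates G))
      = ∑ s ∈ G.neighborFinset u, #(triangleMates G s) := card_biUnion hdisj
    _ = ∑ s ∈ triangleNeighborFinset G u, #(triangleMates G s) := by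
      rw [triangleNeighborFinset]
      refine (sum_filter_of_ne fun s _ hs => ?_).symm
      obtain ⟨x, hx⟩ := card_ne_zero.1 hs
      obtain ⟨m, hsx, hsm, hxm⟩ := mem_triangleMates.1 hx
      exact ⟨x, m, hsx, hsm, hxm⟩
    _ = 2 * #(triangleNeighborFinset G u) := by
      rw [sum_congr rfl fun s hs => hsat.card_triangleMates (mem_triangleNeighborFinset.1 hs).2,
        sum_const, smul_eq_mul, mul_comm]

lemma card_c4Opposites : #(c4Opposites G u) = (G.degree u).choose 2 := by
  rw [← card_neighborFinset_eq_degree, ← card_powersetCard]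
  refine card_nbij (fun z => G.neighborFinset u ∩ G.neighborFinset z) (fun z hz => ?_)
    (fun z hz z' hz' heq => ?_) fun P hP => ?_
  · rw [mem_coe, mem_c4Opposites] at hz
    exact mem_powersetCard.2 ⟨inter_subset_left,
      (hsat.card_inter_neighborFinset_le_two (Ne.symm hz.1) hz.2.1).antisymm hz.2.2⟩
  · rw [mem_coe, mem_c4Opposites] at hz hz'
    dsimp only at heq
    obtain ⟨p, hp, q, hq, hpq⟩ := one_lt_card.1 hz.2.2
    have hp' := heq ▸ hp
    have hq' := heq ▸ hq
    simp only [mem_inter, mem_neighborFinset] at hp hq hp' hq'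
    exact hsat.eq_of_three_common_neighbors hpq (fun h => hu ⟨p, q, hp.1, hq.1, h⟩) hp.1.symm
      hq.1.symm hp.2.symm hq.2.symm hp'.2.symm hq'.2.symm (Ne.symm hz.1) (Ne.symm hz'.1)
  · obtain ⟨hPN, hP2⟩ := mem_powersetCard.1 hP
    obtain ⟨p, q, hpq, rfl⟩ := card_eq_two.1 hP2
    have hup : G.Adj u p := by simpa using hPN (mem_insert_self p {q})
    have huq : G.Adj u q := by simpa using hPN (mem_insert_of_mem (mem_singleton_self q))
    obtain ⟨x, hxu, hpx, hqx⟩ := hsat.exists_common_neighbor_ne hu hup huq hpq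
    have hsub : {p, q} ⊆ G.neighborFinset u ∩ G.neighborFinset x := by
      simp [insert_subset_iff, hup, huq, hpx.symm, hqx.symm]
    have hnadj : ¬ G.Adj u x := fun h => hu ⟨p, x, hup, h, hpx⟩
    refine ⟨x, ?_, (eq_of_subset_of_card_le hsub ?_).symm⟩
    · rw [mem_coe, mem_c4Opposites]
      exact ⟨hxu, hnadj, hP2 ▸ card_le_card hsub⟩
    · rw [hP2]
      exact hsat.card_inter_neighborFinset_le_two (Ne.symm hxu) hnadj

lemma mem_c4Opposites_or_exists_mem_triangleMates (hzu : z ≠ u) (hnadj : ¬ G.Adj u z) :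
    z ∈ c4Opposites G u ∨ ∃ s, G.Adj u s ∧ z ∈ triangleMates G s := by
  rcases hsat.exists_common_neighbors_or_triangle (Ne.symm hzu) hnadj with
    ⟨p, q, hpq, hup, huq, hzp, hzq⟩ | ⟨s, m, hus, hum, hsm, -⟩ |
    ⟨s, m, hzs, hzm, hsm, hus⟩
  · refine Or.inl (mem_c4Opposites.2 ⟨hzu, hnadj, ?_⟩)
    calc 2 = #{p, q} := (card_pair hpq).symm
      _ ≤ _ := card_le_card (by simp [insert_subset_iff, hup, huq, hzp, hzq])
  · exact absurd ⟨s, m, hus, hum, hsm⟩ hu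
  · exact Or.inr ⟨s, hus, mem_triangleMates.2 ⟨m, hzs.symm, hsm, hzm⟩⟩

lemma notMem_triangleMates_of_mem_c4Opposites (hz : z ∈ c4Opposites G u)
    (hus : G.Adj u s) : z ∉ triangleMates G s := by
  intro hzs
  obtain ⟨m, hsz, hsm, hzm⟩ := mem_triangleMates.1 hzs
  obtain ⟨p, hp, q, hq, hpq⟩ := one_lt_card.1 (mem_c4Opposites.1 hz).2.2
  simp only [mem_inter, mem_neighborFinset] at hp hq
  exact hpq ((hsat.eq_of_adj_of_triangle hu hsz hsm hzm hus hp.1 hp.2.symm).trans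
    (hsat.eq_of_adj_of_triangle hu hsz hsm hzm hus hq.1 hq.2.symm).symm)

theorem card_eq_of_notMem_triangleVerts :
    Fintype.card V =
      1 + G.degree u + (G.degree u).choose 2 + 2 * #(triangleNeighborFinset G u) := by
  set N := G.neighborFinset u
  set Z := c4Opposites G u
  set B := N.biUnion (triangleMates G)
  have hB : ∀ {x}, x ∈ B ↔ ∃ s, G.Adj u s ∧ x ∈ triangleMates G s := by simp [B, N]
  have hcover : insert u (N ∪ Z ∪ B) = univ := by
    refine eq_univ_of_forall fun z => ?_
    rw [mem_insert, mem_union, mem_union, mem_neighborFinset, hB]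
    by_cases hzu : z = u
    · exact Or.inl hzu
    by_cases huz : G.Adj u z
    · exact Or.inr (Or.inl (Or.inl huz))
    rcases hsat.mem_c4Opposites_or_exists_mem_triangleMates hu hzu huz with h | h
    exacts [Or.inr (Or.inl (Or.inr h)), Or.inr (Or.inr h)]
  have huNZB : u ∉ N ∪ Z ∪ B := by
    rw [mem_union, mem_union, hB]
    rintro ((h | h) | ⟨s, -, hs⟩)
    exacts [G.irrefl ((mem_neighborFinset _ _ _).1 h), (mem_c4Opposites.1 h).1 rfl,
      hu (mem_triangleVerts_of_mem_triangleMates hs)]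
  have hNZ : Disjoint N Z := disjoint_left.2 fun x hx hx' =>
    (mem_c4Opposites.1 hx').2.1 ((mem_neighborFinset _ _ _).1 hx)
  have hNB : Disjoint N B := disjoint_left.2 fun x hx hx' => by
    obtain ⟨s, hus, hxs⟩ := hB.1 hx'
    obtain ⟨m, hsx, -, -⟩ := mem_triangleMates.1 hxs
    exact hu ⟨s, x, hus, (mem_neighborFinset _ _ _).1 hx, hsx⟩
  have hZB : Disjoint Z B := disjoint_left.2 fun x hx hx' => by
    obtain ⟨s, hus, hxs⟩ := hB.1 hx'
    exact hsat.notMem_triangleMates_of_mem_c4Opposites hu hx hus hxs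
  rw [← card_univ, ← hcover, card_insert_of_notMem huNZB,
    card_union_of_disjoint (disjoint_union_left.2 ⟨hNB, hZB⟩), card_union_of_disjoint hNZ,
    card_neighborFinset_eq_degree, hsat.card_c4Opposites hu, hsat.card_biUnion_triangleMates hu]
  ring

lemma degree_le_of_adj (huw : G.Adj u w) (hw : ∀ y, G.Adj w y → y ∉ triangleVerts G) :
    G.degree w ≤ G.degree u := by
  have hwu : u ∈ G.neighborFinset w := by simpa using huw.symm
  have huw' : w ∈ G.neighborFinset u := by simpa using huw
  have key : #((G.neighborFinset w).erase u) ≤ #((G.neighborFinset u).erase w) := by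
    refine card_le_card_of_forall_subsingleton G.Adj (fun p hp => ?_)
      fun y hy p hp p' hp' => ?_
    · rw [mem_erase, mem_neighborFinset] at hp
      have hnup : ¬ G.Adj u p := fun h => hu ⟨w, p, huw, h, hp.2⟩
      rcases hsat.exists_common_neighbors_or_triangle (Ne.symm hp.1) hnup with
        ⟨α, β, hαβ, huα, huβ, hpα, hpβ⟩ | ⟨s, m, hus, hum, hsm, -⟩ |
        ⟨s, m, hps, hpm, hsm, -⟩
      · by_cases hαw : α = w
        · exact ⟨β, by simp [← hαw, hαβ.symm, huβ], hpβ⟩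
        · exact ⟨α, by simp [hαw, huα], hpα⟩
      · exact absurd ⟨s, m, hus, hum, hsm⟩ hu
      · exact absurd ⟨s, m, hps, hpm, hsm⟩ (hw p hp.2)
    · simp only [mem_erase, mem_neighborFinset] at hy hp hp'
      have hwy : ¬ G.Adj w y := fun h => hu ⟨w, y, huw, hy.2, h⟩
      exact hsat.eq_of_three_common_neighbors (Ne.symm hy.1) hwy huw.symm hy.2.symm hp.1.2
        hp.2.symm hp'.1.2 hp'.2.symm (Ne.symm hp.1.1) (Ne.symm hp'.1.1)
  rw [card_erase_of_mem hwu, card_erase_of_mem huw', card_neighborFinset_eq_degree,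
    card_neighborFinset_eq_degree] at key
  have : 0 < G.degree u := G.degree_pos_iff_exists_adj u |>.2 ⟨w, huw⟩
  omega

/-- Otherwise `card_eq_of_notMem_triangleVerts` at `u` and at `w` contradicts
`degree_le_of_adj`. -/
lemma exists_adj_mem_triangleVerts (hc : 0 < #(triangleNeighborFinset G u)) (huw : G.Adj u w) :
    ∃ y, G.Adj w y ∧ y ∈ triangleVerts G := by
  by_contra! hw
  have hwA : w ∉ triangleVerts G := fun ⟨a, b, hwa, hwb, hab⟩ =>
    hw a hwa ⟨w, b, hwa.symm, hab, hwb⟩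
  have hcw : #(triangleNeighborFinset G w) = 0 := card_eq_zero.2 <| eq_empty_of_forall_notMem
    fun y hy => hw y (mem_triangleNeighborFinset.1 hy).1 (mem_triangleNeighborFinset.1 hy).2
  have hdeg := hsat.degree_le_of_adj hu huw hw
  have := Nat.choose_le_choose 2 hdeg
  have := hsat.card_eq_of_notMem_triangleVerts hu
  have := hsat.card_eq_of_notMem_triangleVerts hwA
  omega

lemma not_exists_adj_of_adj_mem_cliqueFinset (hw : w ∉ triangleVerts G) (huw : G.Adj u w)
    (hT : T ∈ G.cliqueFinset 3) (hy : y ∈ T) (hwy : G.Adj w y) : ¬ ∃ x ∈ T, G.Adj u x := by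
  rintro ⟨x, hx, hux⟩
  by_cases hxy : x = y
  · subst hxy
    exact hu ⟨w, x, huw, hux, hwy⟩
  rw [hsat.eq_insert_triangleMates hT hx, mem_insert] at hy
  obtain ⟨m, hxy', hxm, hym⟩ := mem_triangleMates.1 (hy.resolve_left (Ne.symm hxy))
  have hwx := hsat.eq_of_adj_of_triangle hu hxy' hxm hym hux huw hwy
  exact hw (hwx ▸ mem_triangleVerts_of_mem_cliqueFinset hT hx)

lemma card_filter_exists_adj :
    #{T ∈ G.cliqueFinset 3 | ∃ x ∈ T, G.Adj u x} = #(triangleNeighborFinset G u) := by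
  symm
  refine card_nbij (fun s => insert s (triangleMates G s)) (fun s hs => ?_)
    (fun s hs s' hs' heq => ?_) fun T hT => ?_
  · rw [mem_coe, mem_triangleNeighborFinset] at hs
    exact mem_filter.2 ⟨hsat.insert_triangleMates_mem_cliqueFinset hs.2, s,
      mem_insert_self _ _, hs.1⟩
  · rw [mem_coe, mem_triangleNeighborFinset] at hs hs'
    dsimp only at heq
    have hs's : s' ∈ insert s (triangleMates G s) := heq ▸ mem_insert_self s' _
    rcases mem_insert.1 hs's with h | h
    · exact h.symm
    · obtain ⟨m, hss', -, -⟩ := mem_triangleMates.1 h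
      exact absurd ⟨s, s', hs.1, hs'.1, hss'⟩ hu
  · obtain ⟨hT, x, hx, hux⟩ := mem_filter.1 (mem_coe.1 hT)
    exact ⟨x, mem_triangleNeighborFinset.2 ⟨hux, mem_triangleVerts_of_mem_cliqueFinset hT hx⟩,
      (hsat.eq_insert_triangleMates hT hx).symm⟩

lemma card_filter_notMem_le (hc : 0 < #(triangleNeighborFinset G u)) :
    #{w ∈ G.neighborFinset u | w ∉ triangleVerts G} ≤
      6 * #{T ∈ G.cliqueFinset 3 | ¬ ∃ x ∈ T, G.Adj u x} := by
  set M := {T ∈ G.cliqueFinset 3 | ¬ ∃ x ∈ T, G.Adj u x}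
  have hcover : {w ∈ G.neighborFinset u | w ∉ triangleVerts G} ⊆
      M.biUnion fun T => T.biUnion fun p => G.neighborFinset p ∩ G.neighborFinset u := by
    intro w hw
    rw [mem_filter, mem_neighborFinset] at hw
    obtain ⟨y, hwy, hy⟩ := hsat.exists_adj_mem_triangleVerts hu hc hw.1
    have hT := hsat.insert_triangleMates_mem_cliqueFinset hy
    simp only [mem_biUnion, mem_inter, mem_neighborFinset]
    exact ⟨_, mem_filter.2 ⟨hT, hsat.not_exists_adj_of_adj_mem_cliqueFinset hu hw.2 hw.1 hT
      (mem_insert_self _ _) hwy⟩, y, mem_insert_self _ _, hwy.symm, hw.1⟩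
  refine (card_le_card hcover).trans ((card_biUnion_le_card_mul _ _ 6 fun T hT => ?_).trans_eq
    (mul_comm _ _))
  obtain ⟨hT, hmiss⟩ := mem_filter.1 hT
  calc _ ≤ #T * 2 := card_biUnion_le_card_mul _ _ _ fun p hp =>
        hsat.card_inter_neighborFinset_le_two (u := p) (z := u)
          (fun h => hu (h ▸ mem_triangleVerts_of_mem_cliqueFinset hT hp))
          fun h => hmiss ⟨p, hp, h.symm⟩
    _ = 6 := by rw [(mem_cliqueFinset_iff.1 hT).card_eq]

lemma degree_le_add_six_mul (hc : 0 < #(triangleNeighborFinset G u)) :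
    G.degree u ≤ #(triangleNeighborFinset G u) +
      6 * (#(G.cliqueFinset 3) - #(triangleNeighborFinset G u)) := by
  have hsplit := card_filter_add_card_filter_not (s := G.neighborFinset u)
    (fun x => x ∈ triangleVerts G)
  have hhit := card_filter_add_card_filter_not (s := G.cliqueFinset 3)
    (fun T => ∃ x ∈ T, G.Adj u x)
  rw [hsat.card_filter_exists_adj hu] at hhit
  have := hsat.card_filter_notMem_le hu hc
  rw [← card_neighborFinset_eq_degree, ← hsplit]
  change #(triangleNeighborFinset G u) + _ ≤ _
  omega

theorem two_mul_card_le {k t : ℕ} (hc : 0 < #(triangleNeighborFinset G u))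
    (hk : #(G.cliqueFinset 3) = k) (ht : t = k - #(triangleNeighborFinset G u)) :
    2 * Fintype.card V ≤ k ^ 2 + (10 * t + 5) * k + 25 * t ^ 2 + 7 * t + 2 := by
  have hck : #(triangleNeighborFinset G u) ≤ k :=
    hk ▸ hsat.card_filter_exists_adj hu ▸ card_filter_le _ _
  obtain ⟨t', rfl⟩ := Nat.exists_eq_add_of_le hck
  rw [Nat.add_sub_cancel_left] at ht
  subst ht
  have hd := hsat.degree_le_add_six_mul hu hc
  rw [hk, Nat.add_sub_cancel_left] at hd
  exact two_mul_le_of_le_add_six_mul (hsat.card_eq_of_notMem_triangleVerts hu) hd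

end UniquelySaturated

end Counting

end

theorem stmt10 {V : Type*} [Fintype V] (G : SimpleGraph V)
    (hsat : UniquelySaturated diamond G)
    (k : ℕ) (hk : 2 ≤ k) (hcount : (G.cliqueSet 3).ncard = k)
    (t : ℕ)
    (ht : t = sInf {m : ℕ | ∃ u : V, u ∉ triangleVerts G ∧
      (∃ a ∈ triangleVerts G, G.Adj u a) ∧
      m = k - (G.neighborSet u ∩ triangleVerts G).ncard}) :
    2 * Fintype.card V ≤ k ^ 2 + (10 * t + 5) * k + 25 * t ^ 2 + 7 * t + 2 := by
  classical
  rcases Set.eq_empty_or_nonempty {m : ℕ | ∃ u : V, u ∉ triangleVerts G ∧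
      (∃ a ∈ triangleVerts G, G.Adj u a) ∧
      m = k - (G.neighborSet u ∩ triangleVerts G).ncard} with hS | hS
  · obtain ⟨a, ha⟩ := exists_mem_triangleVerts_of_ncard_cliqueSet_ne_zero (G := G) (by omega)
    have hall : ∀ v, v ∈ triangleVerts G := fun v => by_contra fun hv =>
      let ⟨u, hu, hadj⟩ := hsat.exists_notMem_adj_mem_triangleVerts ha hv
      hS.subset ⟨u, hu, hadj, rfl⟩
    have hn := card_le_three_mul_card_cliqueFinset hall
    rw [← Set.ncard_coe_finset, coe_cliqueFinset, hcount] at hn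
    rw [ht, hS, Nat.sInf_empty]
    nlinarith
  · obtain ⟨u, hu, ⟨b, hb, hub⟩, htu⟩ := ht ▸ Nat.sInf_mem hS
    rw [← coe_triangleNeighborFinset, Set.ncard_coe_finset] at htu
    exact hsat.two_mul_card_le hu
      (Finset.card_pos.2 ⟨b, mem_triangleNeighborFinset.2 ⟨hub, hb⟩⟩)
      (by rw [← Set.ncard_coe_finset, coe_cliqueFinset, hcount]) htu
end
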